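/- Let p be an odd prime, q a power of p, and 𝔽_q the finite field with q elements. Then there exists an irreducible λ-quiddity over 𝔽_q of size at least max(4, p), and every irreducible λ-quiddity over 𝔽_q has size at most (q² + 3)/2. -/
import Mathlib

/-- The matrix `[[a, -1], [1, 0]]`. -/
def mMat {A : Type*} [CommRing A] (a : A) : Matrix (Fin 2) (Fin 2) A := !![a, -1; 1, 0]

/-- `M_n(a₁, …, aₙ) = mMat aₙ * ⋯ * mMat a₁`, for the tuple given as a list `[a₁, …, aₙ]`. -/
def mProd {A : Type*} [CommRing A] (l : List A) : Matrix (Fin 2) (Fin 2) A :=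
  ((l.map mMat).reverse).prod

/-- The sum `(a₁,…,aₙ) ⊕ (b₁,…,b_m) = (a₁+b_m, a₂,…,a_{n−1}, aₙ+b₁, b₂,…,b_{m−1})`. -/
def oplus {A : Type*} [CommRing A] (a b : List A) : List A :=
  (a.headD 0 + b.getLastD 0) ::
    (a.dropLast.tail ++ (a.getLastD 0 + b.headD 0) :: b.dropLast.tail)

/-- Two tuples are equivalent if one is a cyclic rotation of the other or of its reversal. -/
def TupEquiv {A : Type*} (a b : List A) : Prop :=
  (∃ k, b = a.rotate k) ∨ (∃ k, b = a.reverse.rotate k)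

/-- A λ-quiddity over `R ⊆ A`: all entries lie in `R` and `M_n(a₁,…,aₙ) = ± Id`. -/
def IsQuiddity {A : Type*} [CommRing A] (R : Set A) (c : List A) : Prop :=
  (∀ x ∈ c, x ∈ R) ∧ (mProd c = 1 ∨ mProd c = -1)

/-- A λ-quiddity `c` over `R` is reducible if `c ∼ a ⊕ b` with `a ∈ R^m`, `m ≥ 3`,
and `b` a λ-quiddity over `R` of size `l ≥ 3`. -/
def IsReducible {A : Type*} [CommRing A] (R : Set A) (c : List A) : Prop :=
  ∃ a b : List A, 3 ≤ a.length ∧ 3 ≤ b.length ∧ (∀ x ∈ a, x ∈ R) ∧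
    IsQuiddity R b ∧ TupEquiv c (oplus a b)

/-- An irreducible λ-quiddity over `R`: a λ-quiddity of size `≥ 3` which is not reducible. -/
def IrreducibleQuiddity {A : Type*} [CommRing A] (R : Set A) (c : List A) : Prop :=
  IsQuiddity R c ∧ 3 ≤ c.length ∧ ¬ IsReducible R c

/-- The continuant `K_i(a₁,…,a_i)`, determinant of the tridiagonal matrix with diagonal
`a₁,…,a_i` and off-diagonal entries `1`; `K₀ = 1`. -/
def cont {A : Type*} [CommRing A] : List A → A
  | [] => 1
  | [a] => a
  | a :: b :: l => a * cont (b :: l) - cont l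

section Aux
variable {A : Type*} [CommRing A]

lemma mProd_nil : mProd ([] : List A) = 1 := rfl

lemma mProd_cons (a : A) (l : List A) : mProd (a :: l) = mProd l * mMat a := by
  simp [mProd]

lemma mProd_append (l₁ l₂ : List A) : mProd (l₁ ++ l₂) = mProd l₂ * mProd l₁ := by
  simp [mProd]

lemma mProd_singleton (a : A) : mProd [a] = mMat a := by
  simp [mProd]

lemma mProd_det (l : List A) : mProd l 0 0 * mProd l 1 1 - mProd l 0 1 * mProd l 1 0 = 1 := by
  have h : ∀ M : Matrix (Fin 2) (Fin 2) A, M.det = M 0 0 * M 1 1 - M 0 1 * M 1 0 :=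
    fun M => Matrix.det_fin_two M
  have hd : (mProd l).det = 1 := by
    induction l with
    | nil => simp [mProd_nil]
    | cons a l ih =>
        rw [mProd_cons, Matrix.det_mul, ih, one_mul]
        rw [h]; simp [mMat]
  rw [← h, hd]

lemma mMat_sandwich (x y : A) (S : Matrix (Fin 2) (Fin 2) A) :
    mMat y * S * mMat x =
      !![(y * S 0 0 + -(S 1 0)) * x + (y * S 0 1 + -(S 1 1)), S 1 0 + -(y * S 0 0);
         S 0 0 * x + S 0 1, -(S 0 0)] := by
  rw [Matrix.eta_fin_two S]
  simp [mMat, Matrix.mul_fin_two]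

lemma sandwich_eleven (x y : A) (S : Matrix (Fin 2) (Fin 2) A) :
    (mMat y * S * mMat x) 1 1 = - S 0 0 := by
  rw [mMat_sandwich]; rfl

lemma neg_one_fin_two : (-1 : Matrix (Fin 2) (Fin 2) A) = !![-1, 0; 0, -1] := by
  ext i j; fin_cases i <;> fin_cases j <;> simp [Matrix.one_apply]

lemma exists_ext (S : Matrix (Fin 2) (Fin 2) A)
    (hdet : S 0 0 * S 1 1 - S 0 1 * S 1 0 = 1) (h : S 0 0 = 1 ∨ S 0 0 = -1) :
    ∃ x y : A, mMat y * S * mMat x = 1 ∨ mMat y * S * mMat x = -1 := by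
  have hsq : S 0 0 * S 0 0 = 1 := by rcases h with h | h <;> rw [h] <;> ring
  refine ⟨-(S 0 0) * S 0 1, S 0 0 * S 1 0, ?_⟩
  have e00 : (S 0 0 * S 1 0 * S 0 0 + -(S 1 0)) * (-(S 0 0) * S 0 1)
      + (S 0 0 * S 1 0 * S 0 1 + -(S 1 1)) = -(S 0 0) := by
    linear_combination (S 1 1 - S 0 0 * S 0 1 * S 1 0) * hsq + (-(S 0 0)) * hdet
  have e01 : S 1 0 + -(S 0 0 * S 1 0 * S 0 0) = 0 := by
    linear_combination (-(S 1 0)) * hsq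
  have e10 : S 0 0 * (-(S 0 0) * S 0 1) + S 0 1 = 0 := by
    linear_combination (-(S 0 1)) * hsq
  have key : mMat (S 0 0 * S 1 0) * S * mMat (-(S 0 0) * S 0 1) = !![-(S 0 0), 0; 0, -(S 0 0)] := by
    rw [mMat_sandwich, e00, e01, e10]
  rcases h with h | h
  · right; rw [key, h, neg_one_fin_two]
  · left; rw [key, h, Matrix.one_fin_two]; norm_num

lemma mMat_mul_entries (z : A) (M : Matrix (Fin 2) (Fin 2) A) :
    (mMat z * M) 0 0 = z * M 0 0 - M 1 0 ∧ (mMat z * M) 0 1 = z * M 0 1 - M 1 1 ∧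
    (mMat z * M) 1 0 = M 0 0 ∧ (mMat z * M) 1 1 = M 0 1 := by
  have h : mMat z * M = !![z * M 0 0 + -(M 1 0), z * M 0 1 + -(M 1 1); M 0 0, M 0 1] := by
    rw [Matrix.eta_fin_two M]
    simp [mMat, Matrix.mul_fin_two]
  rw [h]
  refine ⟨?_, ?_, ?_, ?_⟩ <;> simp [Matrix.cons_val_zero, Matrix.cons_val_one] <;> ring

lemma list_decomp {α : Type*} (l : List α) (h : 2 ≤ l.length) :
    ∃ (u : α) (M : List α) (v : α), l = u :: M ++ [v] := by
  match l with
  | [] => simp at h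
  | [a] => simp at h
  | a :: b :: t =>
    obtain ⟨M, v, hMv⟩ : ∃ M v, b :: t = M ++ [v] := ⟨(b :: t).dropLast, (b :: t).getLast (by simp),
      (List.dropLast_append_getLast (by simp)).symm⟩
    exact ⟨a, M, v, by rw [hMv]; simp⟩

lemma mProd_sandwich_list (x y : A) (d : List A) :
    mProd (x :: d ++ [y]) = mMat y * mProd d * mMat x := by
  have h : x :: d ++ [y] = ([x] ++ d) ++ [y] := by simp
  rw [h, mProd_append, mProd_append]
  simp [mProd, mul_assoc]

lemma oplus_explicit (u v x y : A) (L d : List A) :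
    oplus (u :: L ++ [v]) (x :: d ++ [y]) = (u + y) :: (L ++ (v + x) :: d) := by
  have hh : ((u :: L) ++ [v]).headD 0 = u := by simp
  have hg : ((u :: L) ++ [v]).getLastD 0 = v := by
    rw [List.getLastD_eq_getLast?, List.getLast?_concat]; rfl
  have hd : ((u :: L) ++ [v]).dropLast.tail = L := by rw [List.dropLast_concat]; rfl
  have hh' : ((x :: d) ++ [y]).headD 0 = x := by simp
  have hg' : ((x :: d) ++ [y]).getLastD 0 = y := by
    rw [List.getLastD_eq_getLast?, List.getLast?_concat]; rfl
  have hd' : ((x :: d) ++ [y]).dropLast.tail = d := by rw [List.dropLast_concat]; rfl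
  unfold oplus
  rw [hh, hg, hd, hh', hg', hd']

lemma mProd_replicate (k : ℕ) (z : A) : mProd (List.replicate k z) = (mMat z) ^ k := by
  simp [mProd, List.map_replicate, List.prod_replicate]

lemma take_add' {α : Type*} (l : List α) (m n : ℕ) :
    l.take (m + n) = l.take m ++ (l.drop m).take n := by
  rw [List.take_drop]
  conv_lhs => rw [← List.take_append_drop m (l.take (m + n))]
  rw [List.take_take, min_eq_left (Nat.le_add_right m n)]

lemma mMat_two_pow (k : ℕ) : (mMat (2:A)) ^ k = !![(k:A)+1, -(k:A); (k:A), 1-(k:A)] := by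
  induction k with
  | zero => simp [Matrix.one_fin_two]
  | succ k ih =>
      rw [pow_succ, ih]
      simp only [mMat, Matrix.mul_fin_two]
      congr 1 <;> push_cast <;> ring

lemma mMat_zero_pow_four : (mMat (0:A)) ^ 4 = 1 := by
  have h2 : (mMat (0:A)) ^ 2 = -1 := by
    rw [pow_two]
    simp [mMat, Matrix.mul_fin_two]
    ext i j; fin_cases i <;> fin_cases j <;> simp [Matrix.one_apply]
  have h4 : (4:ℕ) = 2*2 := rfl
  rw [h4, pow_mul, h2]
  simp

/-- If `c` is reducible (over the full set) then some rotation `r` of `c` or of its reverse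
has a final segment `r.drop m`, `3 ≤ m < r.length`, whose matrix has `(0,0)` entry `±1`. -/
lemma reducible_imp {c : List A} (h : IsReducible Set.univ c) :
    ∃ (r : List A) (k mm : ℕ), (r = c.rotate k ∨ r = c.reverse.rotate k) ∧ 3 ≤ mm ∧
      mm < r.length ∧ ((mProd (r.drop mm)) 0 0 = 1 ∨ (mProd (r.drop mm)) 0 0 = -1) := by
  obtain ⟨a, b, ha3, hb3, -, hbq, hequiv⟩ := h
  obtain ⟨x, I, y, hb⟩ := list_decomp b (le_trans (by norm_num) hb3)
  obtain ⟨u, L, v, ha⟩ := list_decomp a (le_trans (by norm_num) ha3)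
  have hIlen : b.length = I.length + 2 := by rw [hb]; simp
  have hoab : oplus a b = ((u + y) :: L ++ [v + x]) ++ I := by
    rw [ha, hb, oplus_explicit]; simp
  have hdrop : (oplus a b).drop a.length = I := by
    have hlen : ((u + y) :: L ++ [v + x]).length = a.length := by rw [ha]; simp
    rw [hoab, ← hlen, List.drop_left]
  have hIentry : (mProd I) 0 0 = 1 ∨ (mProd I) 0 0 = -1 := by
    rcases hbq.2 with hq1 | hq1 <;> rw [hb, mProd_sandwich_list] at hq1
    · right
      have := sandwich_eleven x y (mProd I)
      rw [hq1] at this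
      have h11 : (1 : Matrix (Fin 2) (Fin 2) A) 1 1 = 1 := Matrix.one_apply_eq 1
      rw [h11] at this
      linear_combination this
    · left
      have := sandwich_eleven x y (mProd I)
      rw [hq1] at this
      have h11 : (-1 : Matrix (Fin 2) (Fin 2) A) 1 1 = -1 := by
        rw [neg_one_fin_two]; rfl
      rw [h11] at this
      linear_combination this
  have hlen2 : (oplus a b).length = a.length + I.length := by
    rw [hoab, ha]; simp; ring
  rcases hequiv with ⟨k, hk⟩ | ⟨k, hk⟩
  · exact ⟨oplus a b, k, a.length, Or.inl hk, ha3, by omega, by rw [hdrop]; exact hIentry⟩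
  · exact ⟨oplus a b, k, a.length, Or.inr hk, ha3, by omega, by rw [hdrop]; exact hIentry⟩

/-- A constant list all of whose proper "interior segments" fail the `±1` test is
not reducible. -/
lemma const_not_reducible (z : A) (N : ℕ)
    (hseg : ∀ j, 1 ≤ j → j + 3 ≤ N →
      ¬(((mMat z) ^ j) 0 0 = 1 ∨ ((mMat z) ^ j) 0 0 = -1)) :
    ¬ IsReducible Set.univ (List.replicate N z) := by
  intro h
  obtain ⟨r, k, mm, hr, hm3, hmlt, hval⟩ := reducible_imp h
  have hr' : r = List.replicate N z := by
    rcases hr with h' | h' <;> rw [h'] <;> simp [List.rotate_replicate]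
  rw [hr'] at hmlt hval
  rw [List.length_replicate] at hmlt
  rw [List.drop_replicate, mProd_replicate] at hval
  exact hseg (N - mm) (by omega) (by omega) hval

end Aux

/-- Over a finite field `F` with `q = p^m` elements, `p` an odd prime, there is an irreducible
λ-quiddity of size at least `max 4 p` and every irreducible λ-quiddity has size at most
`(q² + 3)/2`. -/
theorem stmt5 {F : Type*} [Field F] [Fintype F] (p m : ℕ) (hp : p.Prime) (hodd : p ≠ 2)
    (hm : 0 < m) (hq : Fintype.card F = p ^ m) :
    (∃ c : List F, IrreducibleQuiddity Set.univ c ∧ max 4 p ≤ c.length) ∧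
    (∀ c : List F, IrreducibleQuiddity Set.univ c →
      c.length ≤ (Fintype.card F ^ 2 + 3) / 2) := by
  -- characteristic
  haveI hcharP : CharP F p := by
    haveI : CharP F (ringChar F) := ringChar.charP F
    obtain ⟨n, hprime, hcard⟩ := FiniteField.card F (ringChar F)
    have hdvd : ringChar F ∣ p ^ m := by
      rw [← hq, hcard]
      exact dvd_pow_self _ (by positivity)
    have hrc : ringChar F = p :=
      (Nat.prime_dvd_prime_iff_eq hprime hp).mp (hprime.dvd_of_dvd_pow hdvd)
    rw [← hrc]; infer_instance
  have hcast : ∀ k : ℕ, (k : F) = 0 ↔ p ∣ k := fun k => CharP.cast_eq_zero_iff F p k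
  have h2ne : (2 : F) ≠ 0 := by
    intro h2
    have : p ∣ 2 := (hcast 2).mp (by exact_mod_cast h2)
    exact hodd ((Nat.prime_dvd_prime_iff_eq hp Nat.prime_two).mp this)
  constructor
  · -- existence
    by_cases hp3 : p = 3
    · refine ⟨List.replicate 4 (0 : F), ⟨⟨fun _ _ => trivial, ?_⟩, by simp, ?_⟩, by simp [hp3]⟩
      · left; rw [mProd_replicate]; exact mMat_zero_pow_four
      · apply const_not_reducible
        intro j hj1 hj3 hval
        have hj : j = 1 := by omega
        subst hj
        rw [pow_one] at hval
        have h00 : mMat (0:F) 0 0 = 0 := rfl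
        rw [h00] at hval
        rcases hval with h' | h'
        · exact one_ne_zero (α := F) h'.symm
        · exact h2ne (by linear_combination 2 * h')
    · have hp5 : 5 ≤ p := by
        have := hp.two_le
        have h4 : p ≠ 4 := by rintro rfl; norm_num at hp
        omega
      have hpcast : (p : F) = 0 := (hcast p).mpr dvd_rfl
      refine ⟨List.replicate p (2 : F), ⟨⟨fun _ _ => trivial, ?_⟩, by simp; omega, ?_⟩,
        by simp; omega⟩
      · left
        rw [mProd_replicate, mMat_two_pow, hpcast, Matrix.one_fin_two]
        norm_num
      · apply const_not_reducible
        intro j hj1 hj3 hval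
        rw [mMat_two_pow] at hval
        have h00 : (!![(j:F)+1, -(j:F); (j:F), 1-(j:F)]) 0 0 = (j:F)+1 := rfl
        rw [h00] at hval
        rcases hval with h' | h'
        · have hj0 : (j : F) = 0 := by linear_combination h'
          have hdj := (hcast j).mp hj0
          have := Nat.le_of_dvd (by omega) hdj
          omega
        · have hj0 : ((j + 2 : ℕ) : F) = 0 := by push_cast; linear_combination h'
          have hdj := (hcast (j+2)).mp hj0
          have := Nat.le_of_dvd (by omega) hdj
          omega
  · -- upper bound
    intro c hirr
    obtain ⟨⟨-, hqc⟩, hn3, hnred⟩ := hirr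
    classical
    by_contra hlen
    push_neg at hlen
    set N := Fintype.card F with hN
    set n := c.length with hn
    -- arithmetic on N
    have hoddN : Odd N := by rw [hq]; exact (hp.odd_of_ne_two hodd).pow
    obtain ⟨e, he⟩ : Odd (N ^ 2) := hoddN.pow
    have hlen' : e + 2 < n := by omega
    have hn7 : 7 ≤ n := by
      have hN3 : 3 ≤ N := by
        rw [hq]
        calc 3 ≤ p := by have := hp.two_le; omega
        _ ≤ p ^ m := Nat.le_self_pow (by omega) p
      have h9 : 9 ≤ N ^ 2 := by nlinarith
      omega
    -- partial products
    set P : ℕ → Matrix (Fin 2) (Fin 2) F := fun i => mProd (c.take i) with hP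
    have hstep : ∀ i, i < c.length → ∃ z : F, P (i+1) = mMat z * P i := by
      intro i hi
      refine ⟨c.get ⟨i, hi⟩, ?_⟩
      show mProd (c.take (i+1)) = _
      rw [List.take_succ, List.getElem?_eq_getElem hi]
      simp only [Option.toList_some]
      rw [mProd_append, mProd_singleton]
      rfl
    have hrow1 : ∀ i, i < c.length → P (i+1) 1 0 = P i 0 0 ∧ P (i+1) 1 1 = P i 0 1 := by
      intro i hi
      obtain ⟨z, hz⟩ := hstep i hi
      rw [hz]
      exact ⟨(mMat_mul_entries _ _).2.2.1, (mMat_mul_entries _ _).2.2.2⟩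
    have hconsec : ∀ i, i < c.length →
        P (i+1) 0 0 * P i 0 1 - P (i+1) 0 1 * P i 0 0 = 1 := by
      intro i hi
      obtain ⟨z, hz⟩ := hstep i hi
      rw [hz, (mMat_mul_entries _ _).1, (mMat_mul_entries _ _).2.1]
      linear_combination mProd_det (c.take i)
    have hWnz : ∀ i : ℕ, ((P i 0 0, P i 0 1) : F × F) ≠ 0 := by
      intro i hzero
      have h1 : P i 0 0 = 0 := congrArg Prod.fst hzero
      have h2 : P i 0 1 = 0 := congrArg Prod.snd hzero
      have := mProd_det (c.take i)
      rw [show mProd (c.take i) = P i from rfl, h1, h2] at this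
      simp at this
    -- pigeonhole
    set W : ℕ → F × F := fun i => (P i 0 0, P i 0 1) with hW
    set f : Fin (n-2) → Finset (F × F) := fun i => {W (i : ℕ), -W (i : ℕ)} with hf
    set T : Finset (Finset (F × F)) :=
      ((Finset.univ : Finset (F × F)).erase 0).image (fun v => {v, -v}) with hT
    have hcardFF : Fintype.card (F × F) = N ^ 2 := by
      rw [Fintype.card_prod, hN]; ring
    have hserase : ((Finset.univ : Finset (F × F)).erase 0).card = N ^ 2 - 1 := by
      rw [Finset.card_erase_of_mem (Finset.mem_univ 0), Finset.card_univ, hcardFF]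
    have hTcard : 2 * T.card ≤ N ^ 2 - 1 := by
      have hmaps : ∀ v ∈ (Finset.univ : Finset (F × F)).erase 0,
          ({v, -v} : Finset (F × F)) ∈ T := fun v hv => Finset.mem_image_of_mem _ hv
      have hsum := Finset.card_eq_sum_card_fiberwise hmaps
      have hfib : ∀ t ∈ T, 2 ≤ (((Finset.univ : Finset (F × F)).erase 0).filter
          (fun v => ({v, -v} : Finset (F × F)) = t)).card := by
        intro t ht
        obtain ⟨v, hv, rfl⟩ := Finset.mem_image.mp ht
        have hvne : v ≠ 0 := (Finset.mem_erase.mp hv).1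
        have hvnv : v ≠ -v := by
          intro hcontra
          apply hvne
          have h1 : v.1 = -v.1 := congrArg Prod.fst hcontra
          have h2 : v.2 = -v.2 := congrArg Prod.snd hcontra
          have hv1 : v.1 = 0 := by
            have : (2:F) * v.1 = 0 := by linear_combination h1
            rcases mul_eq_zero.mp this with h | h
            · exact absurd h h2ne
            · exact h
          have hv2 : v.2 = 0 := by
            have : (2:F) * v.2 = 0 := by linear_combination h2
            rcases mul_eq_zero.mp this with h | h
            · exact absurd h h2ne
            · exact h
          exact Prod.ext hv1 hv2
        have hsub : ({v, -v} : Finset (F × F)) ⊆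
            ((Finset.univ : Finset (F × F)).erase 0).filter
              (fun w => ({w, -w} : Finset (F × F)) = {v, -v}) := by
          intro w hw
          rcases Finset.mem_insert.mp hw with rfl | hw'
          · exact Finset.mem_filter.mpr ⟨hv, rfl⟩
          · rw [Finset.mem_singleton] at hw'
            subst hw'
            refine Finset.mem_filter.mpr ⟨Finset.mem_erase.mpr ⟨neg_ne_zero.mpr hvne,
              Finset.mem_univ _⟩, ?_⟩
            rw [neg_neg, Finset.pair_comm]
        calc 2 = ({v, -v} : Finset (F × F)).card := (Finset.card_pair hvnv).symm
        _ ≤ _ := Finset.card_le_card hsub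
      calc 2 * T.card = ∑ _t ∈ T, 2 := by rw [Finset.sum_const, smul_eq_mul, mul_comm]
      _ ≤ ∑ t ∈ T, (((Finset.univ : Finset (F × F)).erase 0).filter
            (fun v => ({v, -v} : Finset (F × F)) = t)).card := Finset.sum_le_sum hfib
      _ = ((Finset.univ : Finset (F × F)).erase 0).card := hsum.symm
      _ = N ^ 2 - 1 := hserase
    have hninj : ¬ Function.Injective f := by
      intro hinj
      have himg : (Finset.univ : Finset (Fin (n-2))).image f ⊆ T := by
        intro t ht
        obtain ⟨i, -, rfl⟩ := Finset.mem_image.mp ht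
        exact Finset.mem_image_of_mem _ (Finset.mem_erase.mpr ⟨hWnz _, Finset.mem_univ _⟩)
      have hcard1 : ((Finset.univ : Finset (Fin (n-2))).image f).card = n - 2 := by
        rw [Finset.card_image_of_injective _ hinj, Finset.card_univ, Fintype.card_fin]
      have := Finset.card_le_card himg
      rw [hcard1] at this
      omega
    obtain ⟨i, j, hfij, hij⟩ := Function.not_injective_iff.mp hninj
    -- wlog i < j
    obtain ⟨s', t', hst, hfst⟩ : ∃ s' t' : Fin (n-2), (s' : ℕ) < (t' : ℕ) ∧ f s' = f t' := by
      rcases lt_or_gt_of_ne (fun h : (i:ℕ) = (j:ℕ) => hij (Fin.ext h) : (i:ℕ) ≠ (j:ℕ)) with h | h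
      · exact ⟨i, j, h, hfij⟩
      · exact ⟨j, i, h, hfij.symm⟩
    -- extract sign relation
    have htlt : (t' : ℕ) < n - 2 := t'.isLt
    have hsn : (s' : ℕ) < c.length := by omega
    have htn : (t' : ℕ) < c.length := by omega
    have hcomp : ∃ ε : F, (ε = 1 ∨ ε = -1) ∧ P (t' : ℕ) 0 0 = ε * P (s' : ℕ) 0 0 ∧
        P (t' : ℕ) 0 1 = ε * P (s' : ℕ) 0 1 := by
      have hmem0 : W (t' : ℕ) ∈ f t' := by
        simp only [hf]
        exact Finset.mem_insert_self _ _
      rw [← hfst] at hmem0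
      simp only [hf] at hmem0
      rcases Finset.mem_insert.mp hmem0 with heq | hmem1
      · simp only [hW, Prod.mk.injEq] at heq
        exact ⟨1, Or.inl rfl, by rw [one_mul]; exact heq.1, by rw [one_mul]; exact heq.2⟩
      · have heq := Finset.mem_singleton.mp hmem1
        simp only [hW, Prod.neg_mk, Prod.mk.injEq] at heq
        refine ⟨-1, Or.inr rfl, ?_, ?_⟩
        · rw [heq.1]; ring
        · rw [heq.2]; ring
    obtain ⟨ε, hε1, hε00, hε01⟩ := hcomp
    have hε2 : ε * ε = 1 := by rcases hε1 with h | h <;> rw [h] <;> norm_num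
    -- the segment
    set sv := (s' : ℕ) with hsv
    set tv := (t' : ℕ) with htv
    set d : List F := (c.drop (sv+1)).take (tv-sv) with hd
    have htk : c.take (tv+1) = c.take (sv+1) ++ d := by
      rw [show tv + 1 = (sv+1) + (tv-sv) from by omega, take_add']
    set S := mProd d with hS
    have hPt : P (tv+1) = S * P (sv+1) := by
      show mProd (c.take (tv+1)) = mProd d * mProd (c.take (sv+1))
      rw [htk, mProd_append]
    have hrow := hrow1 sv hsn
    have hA : P (tv+1) 0 0 = S 0 0 * P (sv+1) 0 0 + S 0 1 * P sv 0 0 := by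
      rw [hPt, Matrix.mul_apply, Fin.sum_univ_two, hrow.1]
    have hB : P (tv+1) 0 1 = S 0 0 * P (sv+1) 0 1 + S 0 1 * P sv 0 1 := by
      rw [hPt, Matrix.mul_apply, Fin.sum_univ_two, hrow.2]
    have hdetR := hconsec sv hsn
    have hconsecT := hconsec tv htn
    rw [hA, hB, hε00, hε01] at hconsecT
    have h1 : ε * S 0 0 = 1 := by
      linear_combination hconsecT + (-(ε * S 0 0)) * hdetR
    have hS00 : S 0 0 = ε := by
      linear_combination ε * h1 - S 0 0 * hε2
    have hS001 : S 0 0 = 1 ∨ S 0 0 = -1 := by rw [hS00]; exact hε1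
    obtain ⟨x, y, hxy⟩ := exists_ext S (mProd_det d) hS001
    -- construct the reduction
    have hdlen : d.length = tv - sv := by
      rw [hd, List.length_take, List.length_drop]
      omega
    have hblen : 3 ≤ (x :: d ++ [y]).length := by
      simp [hdlen]
      omega
    set e : List F := c.drop (tv+1) ++ c.take (sv+1) with he'
    have helen : 3 ≤ e.length := by
      rw [he', List.length_append, List.length_drop, List.length_take]
      omega
    obtain ⟨u, L, v, hedec⟩ := list_decomp e (by omega)
    have halen : 3 ≤ ((u - y) :: L ++ [v - x]).length := by
      have h1' : e.length = L.length + 2 := by rw [hedec]; simp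
      simp
      omega
    have hopl : oplus ((u - y) :: L ++ [v - x]) (x :: d ++ [y]) = c.rotate (tv+1) := by
      rw [oplus_explicit, show u - y + y = u from by ring, show v - x + x = v from by ring]
      rw [List.rotate_eq_drop_append_take (by omega : tv + 1 ≤ c.length), htk, ← List.append_assoc]
      rw [← he', hedec]
      simp
    exact hnred ⟨(u - y) :: L ++ [v - x], x :: d ++ [y], halen, hblen, fun _ _ => trivial,
      ⟨fun _ _ => trivial, by rw [mProd_sandwich_list]; exact hxy⟩, Or.inl ⟨tv+1, hopl⟩⟩
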